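/- (No confinement.) Assume ν((0,∞)) > 0. For every a ≥ 0 and every x ∈ ℝ, the OU-type risk process started at x satisfies P( X_t ∈ [−a, a] for all t ≥ 0 ) = 0. -/

import Mathlib

open MeasureTheory ProbabilityTheory Filter
open scoped ENNReal

open Classical in
/-- The Lebesgue–Stieltjes measure associated to a path `g : ℝ → ℝ`, when `g` is
nondecreasing and right-continuous (and the zero measure otherwise). -/
noncomputable def stMeasure (g : ℝ → ℝ) : Measure ℝ :=
  if h : Monotone g ∧ ∀ x, ContinuousWithinAt g (Set.Ici x) x then
    StieltjesFunction.measure ⟨g, h.1, h.2⟩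
  else 0

/-- The pathwise Lebesgue–Stieltjes integral `∫_0^t f(s) dg(s)`. -/
noncomputable def lsInt (g : ℝ → ℝ) (f : ℝ → ℝ) (t : ℝ) : ℝ :=
  ∫ s in Set.Ioc 0 t, f s ∂(stMeasure g)

/-- The OU-type risk process at time `t`, started at `x`, driven by the path `g`:
`X_t = e^{rt} (x - ∫_0^t e^{-rs} dg(s))`. -/
noncomputable def OU (r x : ℝ) (g : ℝ → ℝ) (t : ℝ) : ℝ :=
  Real.exp (r * t) * (x - lsInt g (fun s => Real.exp (-(r * s))) t)

/-- The absolute ruin time `τ₀ = inf {s > 0 : X_s < 0}`, valued in `ℝ≥0∞`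
(with `τ₀ = ∞` if ruin never occurs). -/
noncomputable def ruinTime (r x : ℝ) (g : ℝ → ℝ) : ℝ≥0∞ :=
  ⨅ s ∈ {s : ℝ | 0 < s ∧ OU r x g s < 0}, ENNReal.ofReal s

/-!
On a confined path the discounted integral `∫ e^{-rs} dZ_s` moves by at most
`a (e^{-ru} + e^{-r(u+1)})` over `[u, u + 1]`, so every unit increment `Z (n + 1) - Z n` is at
most `C = a (e^r + 1)`. The increments are i.i.d., so confinement has probability at most
`P(Z_1 ≤ C)^N` for every `N`, and it remains to see that `Z_1 ≤ C` a.s. is impossible.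
If it held, splitting `Z_t` into two independent halves with the law of `Z_{t/2}` would give
`0 ≤ Z_t ≤ C t` for dyadic `t`, hence `E (1 - e^{-Z_t})² ≤ C² t²`. But by the Laplace formula
this expectation is `1 - 2 e^{-t φ(1)} + e^{-t φ(2)} ≥ t (2 φ(1) - φ(2)) e^{-2 t φ(1)}`, and
`2 φ(1) - φ(2) = ∫ (1 - e^{-y})² ν(dy) > 0`.
-/

open Real Set

section LaplaceExponent

variable {ν : Measure ℝ}

lemma integrableOn_one_sub_exp_neg_mul
    (hν : ∫⁻ y in Ioi (0 : ℝ), ENNReal.ofReal (min 1 y) ∂ν < ⊤) {β : ℝ} (hβ : 0 ≤ β) :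
    IntegrableOn (fun y => 1 - exp (-(β * y))) (Ioi 0) ν := by
  have hmin : IntegrableOn (fun y => min 1 y) (Ioi 0) ν := by
    refine ⟨(continuous_const.min continuous_id).aestronglyMeasurable, ?_⟩
    rwa [hasFiniteIntegral_iff_ofReal ((ae_restrict_iff' measurableSet_Ioi).2
      (ae_of_all _ fun y (hy : 0 < y) => le_min zero_le_one hy.le))]
  refine (hmin.const_mul (max 1 β)).mono' (by fun_prop) ?_
  refine (ae_restrict_iff' measurableSet_Ioi).2 (ae_of_all _ fun y (hy : 0 < y) => ?_)
  have hexp_le : exp (-(β * y)) ≤ 1 := exp_le_one_iff.2 (by nlinarith)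
  have hlin : 1 - exp (-(β * y)) ≤ β * y := by linarith [add_one_le_exp (-(β * y))]
  rw [Real.norm_eq_abs, abs_of_nonneg (by linarith)]
  rcases le_total y 1 with h | h
  · rw [min_eq_right h]; nlinarith [le_max_right 1 β]
  · rw [min_eq_left h]; nlinarith [le_max_left 1 β, exp_pos (-(β * y))]

variable {φ : ℝ → ℝ}

lemma laplaceExponent_nonneg
    (hφ : ∀ β ≥ (0 : ℝ), φ β = ∫ y in Ioi (0 : ℝ), (1 - exp (-(β * y))) ∂ν)
    {β : ℝ} (hβ : 0 ≤ β) : 0 ≤ φ β := by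
  rw [hφ β hβ]
  refine setIntegral_nonneg measurableSet_Ioi fun y (hy : 0 < y) => ?_
  linarith [exp_le_one_iff.2 (show -(β * y) ≤ 0 by nlinarith)]

lemma laplaceExponent_two_lt (hν : ∫⁻ y in Ioi (0 : ℝ), ENNReal.ofReal (min 1 y) ∂ν < ⊤)
    (hφ : ∀ β ≥ (0 : ℝ), φ β = ∫ y in Ioi (0 : ℝ), (1 - exp (-(β * y))) ∂ν)
    (hνpos : 0 < ν (Ioi 0)) : φ 2 < 2 * φ 1 := by
  have hint₁ := integrableOn_one_sub_exp_neg_mul hν zero_le_one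
  have hint₂ := integrableOn_one_sub_exp_neg_mul hν zero_le_two
  have hsq : (fun y => (1 - exp (-(1 * y))) ^ 2)
      = fun y => 2 * (1 - exp (-(1 * y))) - (1 - exp (-(2 * y))) := by
    funext y
    rw [show -(2 * y) = -(1 * y) + -(1 * y) by ring, exp_add]
    ring
  have hgap : 2 * φ 1 - φ 2 = ∫ y in Ioi (0 : ℝ), (1 - exp (-(1 * y))) ^ 2 ∂ν := by
    rw [hφ 1 zero_le_one, hφ 2 zero_le_two, ← integral_const_mul,
      ← integral_sub (hint₁.const_mul 2) hint₂, hsq]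
  have hpos : 0 < ∫ y in Ioi (0 : ℝ), (1 - exp (-(1 * y))) ^ 2 ∂ν := by
    rw [setIntegral_pos_iff_support_of_nonneg_ae (ae_of_all _ fun y => sq_nonneg _)
      (hsq ▸ (hint₁.const_mul 2).sub hint₂)]
    refine hνpos.trans_le (measure_mono fun y (hy : 0 < y) => ⟨?_, hy⟩)
    have : exp (-(1 * y)) < 1 := exp_lt_one_iff.2 (by linarith)
    exact pow_ne_zero 2 (by linarith)
  linarith

end LaplaceExponent

lemma mul_exp_neg_two_mul_le (a b : ℝ) :
    (2 * a - b) * exp (-(2 * a)) ≤ 1 - 2 * exp (-a) + exp (-b) := by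
  have hexp : exp (-(2 * a)) = exp (-a) ^ 2 := by rw [← exp_nat_mul]; ring_nf
  calc (2 * a - b) * exp (-(2 * a)) ≤ (exp (2 * a - b) - 1) * exp (-(2 * a)) := by
        exact mul_le_mul_of_nonneg_right (by linarith [add_one_le_exp (2 * a - b)])
          (exp_pos _).le
    _ = exp (-b) - exp (-a) ^ 2 := by rw [sub_mul, ← exp_add, ← hexp]; ring_nf
    _ ≤ 1 - 2 * exp (-a) + exp (-b) := by nlinarith [sq_nonneg (1 - exp (-a))]

section Increments

variable {Ω : Type*} [MeasurableSpace Ω] {μ : Measure Ω}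

lemma one_sub_two_mul_integral_exp_neg_add_le [IsProbabilityMeasure μ] {V : Ω → ℝ}
    (hV : Measurable V) {c : ℝ} (hVc : ∀ᵐ ω ∂μ, V ω ∈ Icc 0 c) :
    1 - 2 * ∫ ω, exp (-(1 * V ω)) ∂μ + ∫ ω, exp (-(2 * V ω)) ∂μ ≤ c ^ 2 := by
  have hint : ∀ β ≥ (0 : ℝ), Integrable (fun ω => exp (-(β * V ω))) μ := fun β hβ =>
    Integrable.of_bound (by fun_prop) 1 <| hVc.mono fun ω hω => by
      rw [norm_of_nonneg (exp_pos _).le]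
      exact exp_le_one_iff.2 (by nlinarith [hω.1])
  have hsq : ∀ ω,
      (1 - exp (-(1 * V ω))) ^ 2 = 1 - 2 * exp (-(1 * V ω)) + exp (-(2 * V ω)) := by
    intro ω
    rw [show -(2 * V ω) = -(1 * V ω) + -(1 * V ω) by ring, exp_add]
    ring
  have hint₁ : Integrable (fun ω => 1 - 2 * exp (-(1 * V ω))) μ :=
    (integrable_const 1).sub ((hint 1 zero_le_one).const_mul 2)
  have hint_sq : Integrable (fun ω => (1 - exp (-(1 * V ω))) ^ 2) μ := by
    simp_rw [hsq]; exact hint₁.add (hint 2 zero_le_two)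
  calc 1 - 2 * ∫ ω, exp (-(1 * V ω)) ∂μ + ∫ ω, exp (-(2 * V ω)) ∂μ
      = ∫ ω, (1 - exp (-(1 * V ω))) ^ 2 ∂μ := by
        simp_rw [hsq]
        rw [integral_add hint₁ (hint 2 zero_le_two), integral_sub (integrable_const 1)
          ((hint 1 zero_le_one).const_mul 2), integral_const, integral_const_mul]
        simp
    _ ≤ ∫ _, c ^ 2 ∂μ := by
        refine integral_mono_ae hint_sq (integrable_const _) (hVc.mono fun ω hω => ?_)
        have h0 : 0 ≤ 1 - exp (-(1 * V ω)) := by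
          linarith [exp_le_one_iff.2 (show -(1 * V ω) ≤ 0 by linarith [hω.1])]
        have h1 : 1 - exp (-(1 * V ω)) ≤ c := by
          linarith [add_one_le_exp (-(1 * V ω)), hω.2]
        exact pow_le_pow_left₀ h0 h1 2
    _ = c ^ 2 := by simp

lemma ae_le_half_of_indepFun_of_identDistrib {X Y : Ω → ℝ} (hind : IndepFun X Y μ)
    (hid : IdentDistrib X Y μ μ) {B : ℝ} (hsum : ∀ᵐ ω ∂μ, X ω + Y ω ≤ B) :
    ∀ᵐ ω ∂μ, X ω ≤ B / 2 := by
  have hmul : μ (X ⁻¹' Ioi (B / 2)) * μ (Y ⁻¹' Ioi (B / 2)) = 0 := by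
    rw [← hind.measure_inter_preimage_eq_mul _ _ measurableSet_Ioi measurableSet_Ioi]
    refine measure_mono_null (fun ω ⟨(hX : B / 2 < X ω), (hY : B / 2 < Y ω)⟩ => ?_)
      (ae_iff.1 hsum)
    show ¬ X ω + Y ω ≤ B
    linarith
  rw [← hid.measure_mem_eq measurableSet_Ioi, mul_self_eq_zero] at hmul
  simp only [ae_iff, not_le]
  exact hmul

def HasStationaryIncrements (Z : ℝ → Ω → ℝ) (μ : Measure Ω) : Prop :=
  ∀ s t : ℝ, 0 ≤ s → s ≤ t →
    Measure.map (fun ω => Z t ω - Z s ω) μ = Measure.map (Z (t - s)) μ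

variable {Z : ℝ → Ω → ℝ}

lemma HasStationaryIncrements.identDistrib (hZ : HasStationaryIncrements Z μ)
    (hmeas : ∀ t, Measurable (Z t)) {s t : ℝ} (hs : 0 ≤ s) (hst : s ≤ t) :
    IdentDistrib (Z t - Z s) (Z (t - s)) μ μ :=
  ⟨((hmeas t).sub (hmeas s)).aemeasurable, (hmeas _).aemeasurable, hZ s t hs hst⟩

lemma hasIndepIncrements_of_nonneg_times (hZ0 : ∀ ω, ∀ s ≤ (0 : ℝ), Z s ω = 0)
    (hindep : ∀ n : ℕ, ∀ t : Fin (n + 1) → ℝ, Monotone t → (∀ i, 0 ≤ t i) →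
      iIndepFun (fun i : Fin n => fun ω => Z (t i.succ) ω - Z (t i.castSucc) ω) μ) :
    HasIndepIncrements Z μ := by
  intro n t ht
  have hZmax : ∀ s ω, Z (max s 0) ω = Z s ω := by
    intro s ω
    rcases le_total s 0 with h | h
    · rw [max_eq_right h, hZ0 ω s h, hZ0 ω 0 le_rfl]
    · rw [max_eq_left h]
  simpa only [hZmax] using hindep n (fun i => max (t i) 0)
    (fun i j hij => max_le_max (ht hij) le_rfl) (fun i => le_max_right _ _)

end Increments

section Subordinator

variable {Ω : Type*} [MeasurableSpace Ω] {μ : Measure Ω} {Z : ℝ → Ω → ℝ}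

lemma ae_le_half_of_ae_le (hind : HasIndepIncrements Z μ) (hstat : HasStationaryIncrements Z μ)
    (hmeas : ∀ t, Measurable (Z t)) (hZ0 : ∀ ω, Z 0 ω = 0) {T B : ℝ} (hT : 0 ≤ T)
    (h : ∀ᵐ ω ∂μ, Z T ω ≤ B) : ∀ᵐ ω ∂μ, Z (T / 2) ω ≤ B / 2 := by
  have hT2 : 0 ≤ T / 2 := by positivity
  refine ae_le_half_of_indepFun_of_identDistrib
    (hind.indepFun_eval_sub (t := T) hT2 (by linarith) (ae_of_all _ hZ0)) ?_
    (h.mono fun ω hω => ?_)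
  · simpa [show T - T / 2 = T / 2 by ring] using
      (hstat.identDistrib hmeas (t := T) hT2 (by linarith)).symm
  · simpa using hω

lemma ae_le_div_two_pow_of_ae_le (hind : HasIndepIncrements Z μ)
    (hstat : HasStationaryIncrements Z μ) (hmeas : ∀ t, Measurable (Z t)) (hZ0 : ∀ ω, Z 0 ω = 0)
    {T B : ℝ} (hT : 0 ≤ T) (h : ∀ᵐ ω ∂μ, Z T ω ≤ B) (k : ℕ) :
    ∀ᵐ ω ∂μ, Z (T / 2 ^ k) ω ≤ B / 2 ^ k := by
  induction k with
  | zero => simpa using h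
  | succ k ih =>
    simpa only [pow_succ, ← div_div] using
      ae_le_half_of_ae_le hind hstat hmeas hZ0 (by positivity) ih

lemma not_ae_le_of_laplaceExponent_two_lt [IsProbabilityMeasure μ]
    (hind : HasIndepIncrements Z μ) (hstat : HasStationaryIncrements Z μ)
    (hmeas : ∀ t, Measurable (Z t)) (hZ0 : ∀ ω, Z 0 ω = 0)
    (hmono : ∀ᵐ ω ∂μ, Monotone fun s => Z s ω) {φ : ℝ → ℝ}
    (hLaplace : ∀ β ≥ (0 : ℝ), ∀ t ≥ (0 : ℝ),
      ∫ ω, exp (-(β * Z t ω)) ∂μ = exp (-(t * φ β)))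
    (hφ₁ : 0 ≤ φ 1) (hφ₂ : φ 2 < 2 * φ 1) (C : ℝ) : ¬ ∀ᵐ ω ∂μ, Z 1 ω ≤ C := by
  intro hC
  set κ := (2 * φ 1 - φ 2) * exp (-(2 * φ 1))
  have hκ : 0 < κ := mul_pos (by linarith) (exp_pos _)
  have hbound : ∀ k : ℕ, κ ≤ C ^ 2 / 2 ^ k := by
    intro k
    set t : ℝ := 1 / 2 ^ k with ht
    have ht0 : 0 < t := by positivity
    have ht1 : t ≤ 1 := by rw [ht, div_le_one (by positivity)]; exact one_le_pow₀ one_le_two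
    have hZt : ∀ᵐ ω ∂μ, Z t ω ∈ Icc 0 (C * t) := by
      filter_upwards [hmono, ae_le_div_two_pow_of_ae_le hind hstat hmeas hZ0 zero_le_one hC k]
        with ω hω hωC
      refine ⟨hZ0 ω ▸ hω ht0.le, ?_⟩
      rw [ht, mul_one_div]; exact hωC
    have hmoment := one_sub_two_mul_integral_exp_neg_add_le (hmeas t) hZt
    rw [hLaplace 1 zero_le_one t ht0.le, hLaplace 2 zero_le_two t ht0.le] at hmoment
    have hgap := mul_exp_neg_two_mul_le (t * φ 1) (t * φ 2)
    have hexp : exp (-(2 * φ 1)) ≤ exp (-(2 * (t * φ 1))) := exp_le_exp.2 (by nlinarith)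
    have htκ : t * κ ≤ t * (C ^ 2 * t) := by
      calc t * κ ≤ t * (2 * φ 1 - φ 2) * exp (-(2 * (t * φ 1))) := by
            rw [mul_assoc]
            exact mul_le_mul_of_nonneg_left (mul_le_mul_of_nonneg_left hexp (by linarith)) ht0.le
        _ ≤ (C * t) ^ 2 := by linarith
        _ = t * (C ^ 2 * t) := by ring
    calc κ ≤ C ^ 2 * t := le_of_mul_le_mul_left htκ ht0
      _ = C ^ 2 / 2 ^ k := by rw [ht]; ring
  obtain ⟨k, hk⟩ := pow_unbounded_of_one_lt (C ^ 2 / κ) one_lt_two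
  rw [div_lt_iff₀ hκ] at hk
  have := (le_div_iff₀ (by positivity)).1 (hbound k)
  linarith

end Subordinator

lemma sub_le_of_forall_OU_mem_Icc {r x a : ℝ} (hr : 0 ≤ r) {g : ℝ → ℝ}
    (hg : Monotone g ∧ ∀ x, ContinuousWithinAt g (Ici x) x)
    (hconf : ∀ t ≥ (0 : ℝ), OU r x g t ∈ Icc (-a) a) {u : ℝ} (hu : 0 ≤ u) :
    g (u + 1) - g u ≤ a * (exp r + 1) := by
  set F : StieltjesFunction ℝ := ⟨g, hg.1, hg.2⟩
  have hF : stMeasure g = F.measure := by rw [stMeasure, dif_pos hg]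
  set f : ℝ → ℝ := fun s => exp (-(r * s))
  have hf : ∀ b c, IntervalIntegrable f F.measure b c := fun b c =>
    (by fun_prop : Continuous f).intervalIntegrable b c
  have hinc : lsInt g f (u + 1) - lsInt g f u = ∫ s in Ioc u (u + 1), f s ∂F.measure := by
    simp only [lsInt, hF, ← intervalIntegral.integral_of_le hu,
      ← intervalIntegral.integral_of_le (by linarith : (0 : ℝ) ≤ u + 1)]
    rw [intervalIntegral.integral_interval_sub_left (hf 0 (u + 1)) (hf 0 u),
      intervalIntegral.integral_of_le (by linarith)]
  have hlow :
      exp (-(r * (u + 1))) * (g (u + 1) - g u) ≤ ∫ s in Ioc u (u + 1), f s ∂F.measure := by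
    have := setIntegral_ge_of_const_le_real (c := exp (-(r * (u + 1)))) measurableSet_Ioc
      measure_Ioc_lt_top.ne (fun s (hs : s ∈ Ioc u (u + 1)) => exp_le_exp.2 (by nlinarith [hs.2]))
      (hf u (u + 1)).1
    rwa [measureReal_def, F.measure_Ioc, ENNReal.toReal_ofReal (sub_nonneg.2 (hg.1 (by linarith)))]
      at this
  have hu₀ := (hconf u hu).2
  have hu₁ := (hconf (u + 1) (by linarith)).1
  rw [OU] at hu₀ hu₁
  have hexp_inv : exp (r * (u + 1)) * exp (-(r * (u + 1))) = 1 := by rw [← exp_add]; simp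
  have hexp_succ : exp (r * (u + 1)) = exp r * exp (r * u) := by rw [← exp_add]; ring_nf
  calc g (u + 1) - g u = exp (r * (u + 1)) * (exp (-(r * (u + 1))) * (g (u + 1) - g u)) := by
        rw [← mul_assoc, hexp_inv, one_mul]
    _ ≤ exp (r * (u + 1)) * ∫ s in Ioc u (u + 1), f s ∂F.measure :=
        mul_le_mul_of_nonneg_left hlow (exp_pos _).le
    _ = exp r * (exp (r * u) * (x - lsInt g f u))
          - exp (r * (u + 1)) * (x - lsInt g f (u + 1)) := by
        rw [← hinc, hexp_succ]; ring
    _ ≤ exp r * a + a := by linarith [mul_le_mul_of_nonneg_left hu₀ (exp_pos r).le]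
    _ = a * (exp r + 1) := by ring

lemma measure_forall_nat_sub_le_eq_zero {Ω : Type*} [MeasurableSpace Ω] {μ : Measure Ω}
    [IsProbabilityMeasure μ] {Z : ℝ → Ω → ℝ} (hind : HasIndepIncrements Z μ)
    (hstat : HasStationaryIncrements Z μ) (hmeas : ∀ t, Measurable (Z t)) {C : ℝ}
    (hC : ¬ ∀ᵐ ω ∂μ, Z 1 ω ≤ C) :
    μ {ω | ∀ n : ℕ, Z (n + 1) ω - Z n ω ≤ C} = 0 := by
  set p := μ (Z 1 ⁻¹' Iic C)
  have hp : p < 1 := lt_of_le_of_ne prob_le_one fun hp₁ => hC <|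
    (ae_iff_measure_eq (hmeas 1 measurableSet_Iic).nullMeasurableSet).2
      (by rw [measure_univ]; exact hp₁)
  have hincr : iIndepFun (fun (i : ℕ) ω => Z (i + 1) ω - Z i ω) μ := by
    simpa using hind.nat (t := fun n : ℕ => (n : ℝ)) Nat.mono_cast
  have hlaw : ∀ i : ℕ, μ ((fun ω => Z (i + 1) ω - Z i ω) ⁻¹' Iic C) = p := fun i =>
    ((hstat.identDistrib hmeas (Nat.cast_nonneg i) (by linarith)).measure_mem_eq
      measurableSet_Iic).trans (by rw [add_sub_cancel_left])
  have hpow : ∀ N, μ {ω | ∀ n : ℕ, Z (n + 1) ω - Z n ω ≤ C} ≤ p ^ N := fun N =>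
    calc μ {ω | ∀ n : ℕ, Z (n + 1) ω - Z n ω ≤ C}
        ≤ μ (⋂ i ∈ Finset.range N, (fun ω => Z (i + 1) ω - Z i ω) ⁻¹' Iic C) :=
          measure_mono fun ω hω => mem_iInter₂.2 fun i _ => hω i
      _ = ∏ i ∈ Finset.range N, μ ((fun ω => Z (i + 1) ω - Z i ω) ⁻¹' Iic C) :=
          hincr.measure_inter_preimage_eq_mul _ fun _ _ => measurableSet_Iic
      _ = p ^ N := by simp [hlaw]
  exact nonpos_iff_eq_zero.1 <|
    ge_of_tendsto' (ENNReal.tendsto_pow_atTop_nhds_zero_of_lt_one hp) hpow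

theorem stmt_10_general
    {Ω : Type} [MeasurableSpace Ω] (μ : Measure Ω) [IsProbabilityMeasure μ]
    (Z : ℝ → Ω → ℝ) (ν : Measure ℝ) (φ : ℝ → ℝ) (r : ℝ) (hr : 0 < r)
    (hZmeas : ∀ t, Measurable (Z t))
    (hZ0 : ∀ ω, ∀ s ≤ (0 : ℝ), Z s ω = 0)
    (hpath : ∀ᵐ ω ∂μ, Monotone (fun s => Z s ω) ∧
      ∀ x, ContinuousWithinAt (fun s => Z s ω) (Set.Ici x) x)
    (hν : ∫⁻ y in Set.Ioi (0 : ℝ), ENNReal.ofReal (min 1 y) ∂ν < ⊤)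
    (hφ : ∀ β ≥ (0 : ℝ), φ β = ∫ y in Set.Ioi (0 : ℝ), (1 - Real.exp (-(β * y))) ∂ν)
    (hLaplace : ∀ β ≥ (0 : ℝ), ∀ t ≥ (0 : ℝ),
      ∫ ω, Real.exp (-(β * Z t ω)) ∂μ = Real.exp (-(t * φ β)))
    (hindep : ∀ n : ℕ, ∀ t : Fin (n + 1) → ℝ, Monotone t → (∀ i, 0 ≤ t i) →
      iIndepFun
        (fun i : Fin n => fun ω => Z (t i.succ) ω - Z (t i.castSucc) ω) μ)
    (hstat : ∀ s t : ℝ, 0 ≤ s → s ≤ t →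
      Measure.map (fun ω => Z t ω - Z s ω) μ = Measure.map (Z (t - s)) μ)
    (hνpos : 0 < ν (Set.Ioi (0 : ℝ)))
    (a x : ℝ) :
    μ {ω | ∀ t ≥ (0 : ℝ), OU r x (fun s => Z s ω) t ∈ Set.Icc (-a) a} = 0 := by
  have hind := hasIndepIncrements_of_nonneg_times hZ0 hindep
  have hunbdd := not_ae_le_of_laplaceExponent_two_lt hind hstat hZmeas (fun ω => hZ0 ω 0 le_rfl)
    (hpath.mono fun _ h => h.1) hLaplace (laplaceExponent_nonneg hφ zero_le_one)
    (laplaceExponent_two_lt hν hφ hνpos) (a * (exp r + 1))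
  refine measure_mono_null (fun ω hω => ?_) (measure_union_null (ae_iff.1 hpath)
    (measure_forall_nat_sub_le_eq_zero hind hstat hZmeas hunbdd))
  by_cases hgood :
      Monotone (fun s => Z s ω) ∧ ∀ x, ContinuousWithinAt (fun s => Z s ω) (Ici x) x
  · exact Or.inr fun n => sub_le_of_forall_OU_mem_Icc hr.le hgood hω (Nat.cast_nonneg n)
  · exact Or.inl hgood

/-- no confinement. If `ν((0,∞)) > 0`, then for every `a ≥ 0` and
`x ∈ ℝ`, `P(X_t ∈ [-a,a] for all t ≥ 0) = 0`. -/
theorem stmt_10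
    {Ω : Type} [MeasurableSpace Ω] (μ : Measure Ω) [IsProbabilityMeasure μ]
    (Z : ℝ → Ω → ℝ) (ν : Measure ℝ) (φ : ℝ → ℝ) (r : ℝ) (hr : 0 < r)
    (hZmeas : ∀ t, Measurable (Z t))
    (hZ0 : ∀ ω, ∀ s ≤ (0 : ℝ), Z s ω = 0)
    (hpath : ∀ᵐ ω ∂μ, Monotone (fun s => Z s ω) ∧
      ∀ x, ContinuousWithinAt (fun s => Z s ω) (Set.Ici x) x)
    (hν : ∫⁻ y in Set.Ioi (0 : ℝ), ENNReal.ofReal (min 1 y) ∂ν < ⊤)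
    (hφ : ∀ β ≥ (0 : ℝ), φ β = ∫ y in Set.Ioi (0 : ℝ), (1 - Real.exp (-(β * y))) ∂ν)
    (hLaplace : ∀ β ≥ (0 : ℝ), ∀ t ≥ (0 : ℝ),
      ∫ ω, Real.exp (-(β * Z t ω)) ∂μ = Real.exp (-(t * φ β)))
    (hindep : ∀ n : ℕ, ∀ t : Fin (n + 1) → ℝ, Monotone t → (∀ i, 0 ≤ t i) →
      iIndepFun
        (fun i : Fin n => fun ω => Z (t i.succ) ω - Z (t i.castSucc) ω) μ)
    (hstat : ∀ s t : ℝ, 0 ≤ s → s ≤ t →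
      Measure.map (fun ω => Z t ω - Z s ω) μ = Measure.map (Z (t - s)) μ)
    (hνpos : 0 < ν (Set.Ioi (0 : ℝ)))
    (a x : ℝ) (ha : 0 ≤ a) :
    μ {ω | ∀ t ≥ (0 : ℝ), OU r x (fun s => Z s ω) t ∈ Set.Icc (-a) a} = 0 :=
  stmt_10_general μ Z ν φ r hr hZmeas hZ0 hpath hν hφ hLaplace hindep hstat hνpos a x
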